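/- arXiv:1507.00532 — 3 statements merged into one kernel-verified Lean document; each statement's English description precedes it below -/
import Mathlib

section
/- The total number of subgroups of Z_{p^4} × Z_{p^2} equals 3p^2 + 5p + 7, for every prime p. -/
/-!
A subgroup `I ≤ G × H` is determined by its image `A` in `G`, the subgroup
`K = {h | (0, h) ∈ I}` of `H`, and the homomorphism `A → H ⧸ K` sending `g` to the class of any
`h` with `(g, h) ∈ I`; conversely every such triple comes from a subgroup. For finite cyclic `G`
and `H`, subgroups correspond to divisors of the order and `|Hom(A, H ⧸ K)| = gcd(|A|, |H ⧸ K|)`,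
so `G × H` has `∑_{a ∣ |G|} ∑_{b ∣ |H|} gcd(a, |H| / b)` subgroups. For `|G| = p⁴` and `|H| = p²`
this is `∑_{i ≤ 4} ∑_{j ≤ 2} p ^ min(i, 2 - j) = 3p² + 5p + 7`.
-/

namespace AddSubgroup

variable {G H : Type*} [AddGroup G] [AddCommGroup H]

def graphMod (A : AddSubgroup G) (K : AddSubgroup H) (φ : A →+ H ⧸ K) : AddSubgroup (G × H) where
  carrier := {x | ∃ h : x.1 ∈ A, (x.2 : H ⧸ K) = φ ⟨x.1, h⟩}
  zero_mem' := ⟨A.zero_mem, (map_zero φ).symm⟩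
  add_mem' := by
    rintro ⟨x₁, x₂⟩ ⟨y₁, y₂⟩ ⟨hx, hx₂⟩ ⟨hy, hy₂⟩
    refine ⟨A.add_mem hx hy, ?_⟩
    show ((x₂ + y₂ : H) : H ⧸ K) = φ (⟨x₁, hx⟩ + ⟨y₁, hy⟩)
    rw [map_add, QuotientAddGroup.mk_add, hx₂, hy₂]
  neg_mem' := by
    rintro ⟨x₁, x₂⟩ ⟨hx, hx₂⟩
    refine ⟨A.neg_mem hx, ?_⟩
    show ((-x₂ : H) : H ⧸ K) = φ (-⟨x₁, hx⟩)
    rw [map_neg, QuotientAddGroup.mk_neg, hx₂]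

variable {A : AddSubgroup G} {K : AddSubgroup H} {φ : A →+ H ⧸ K}

lemma map_fst_graphMod : (graphMod A K φ).map (AddMonoidHom.fst G H) = A := by
  ext x
  refine ⟨fun ⟨y, ⟨hy, _⟩, hyx⟩ => hyx ▸ hy, fun hx => ?_⟩
  obtain ⟨y, hy⟩ := QuotientAddGroup.mk_surjective (φ ⟨x, hx⟩)
  exact ⟨(x, y), ⟨hx, hy⟩, rfl⟩

lemma goursatSnd_graphMod : (graphMod A K φ).goursatSnd = K := by
  ext y
  refine mem_goursatSnd.trans <| Iff.trans ?_ (QuotientAddGroup.eq_zero_iff y)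
  exact ⟨fun ⟨_, hy⟩ => hy.trans (map_zero φ), fun hy => ⟨A.zero_mem, hy.trans (map_zero φ).symm⟩⟩

lemma graphMod_injective : Function.Injective (graphMod A K) := by
  intro φ ψ hφψ
  ext a
  obtain ⟨y, hy⟩ := QuotientAddGroup.mk_surjective (φ a)
  obtain ⟨_, hψ⟩ : ((a : G), y) ∈ graphMod A K ψ := hφψ ▸ ⟨a.2, hy⟩
  exact hy.symm.trans hψ

lemma exists_graphMod_eq (I : AddSubgroup (G × H)) :
    ∃ φ : I.map (AddMonoidHom.fst G H) →+ H ⧸ I.goursatSnd,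
      graphMod (I.map (AddMonoidHom.fst G H)) I.goursatSnd φ = I := by
  have hlift : ∀ a : I.map (AddMonoidHom.fst G H), ∃ y : H, ((a : G), y) ∈ I := by
    rintro ⟨-, ⟨x₁, x₂⟩, hx, rfl⟩
    exact ⟨x₂, hx⟩
  choose y hy using hlift
  have hdiff : ∀ {g : G} {h h' : H}, (g, h) ∈ I → (g, h') ∈ I → -h + h' ∈ I.goursatSnd := by
    intro g h h' hh hh'
    rw [mem_goursatSnd, neg_add_eq_sub]
    simpa using I.sub_mem hh' hh
  refine ⟨AddMonoidHom.mk' (fun a => (y a : H ⧸ I.goursatSnd)) fun a b => ?_, ?_⟩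
  · rw [← QuotientAddGroup.mk_add, QuotientAddGroup.eq]
    exact hdiff (hy (a + b)) (I.add_mem (hy a) (hy b))
  · ext ⟨g, h⟩
    refine ⟨fun ⟨hg, hgh⟩ => ?_, fun hgh => ⟨⟨(g, h), hgh, rfl⟩, ?_⟩⟩
    · simpa using I.add_mem (hy ⟨g, hg⟩) (mem_goursatSnd.1 (QuotientAddGroup.eq.1 hgh.symm))
    · exact QuotientAddGroup.eq.2 (hdiff hgh (hy ⟨g, _⟩))

noncomputable def graphModEquiv (A : AddSubgroup G) (K : AddSubgroup H) :
    (A →+ H ⧸ K) ≃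
      {I : AddSubgroup (G × H) // (I.map (AddMonoidHom.fst G H), I.goursatSnd) = (A, K)} :=
  Equiv.ofBijective (fun φ => ⟨graphMod A K φ, by rw [map_fst_graphMod, goursatSnd_graphMod]⟩)
    ⟨fun _ _ h => graphMod_injective (congrArg Subtype.val h), by
      rintro ⟨I, hI⟩
      obtain ⟨rfl, rfl⟩ := Prod.mk.inj hI
      obtain ⟨φ, hφ⟩ := exists_graphMod_eq I
      exact ⟨φ, Subtype.ext hφ⟩⟩

noncomputable def prodEquivSigma :
    AddSubgroup (G × H) ≃ Σ AK : AddSubgroup G × AddSubgroup H, (AK.1 →+ H ⧸ AK.2) :=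
  (Equiv.sigmaFiberEquiv _).symm.trans <|
    Equiv.sigmaCongrRight fun AK => (graphModEquiv AK.1 AK.2).symm

end AddSubgroup

section Cyclic

open AddSubgroup

variable {A B G : Type*} [AddCommGroup B] [AddCommGroup G]

def ZMod.addMonoidHomEquivKerNsmul (n : ℕ) :
    (ZMod n →+ B) ≃ (nsmulAddMonoidHom n : B →+ B).ker :=
  (ZMod.lift n).symm.trans <| (zmultiplesHom B).symm.subtypeEquiv fun f => by
    rw [AddMonoidHom.mem_ker, nsmulAddMonoidHom_apply, zmultiplesHom_symm_apply, ← map_nsmul,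
      nsmul_one]

theorem IsAddCyclic.card_addMonoidHom [AddGroup A] [IsAddCyclic A] [Finite B] [IsAddCyclic B] :
    Nat.card (A →+ B) = (Nat.card A).gcd (Nat.card B) := by
  rw [← Nat.card_congr (zmodAddCyclicAddEquiv ‹IsAddCyclic A›).addMonoidHomCongrLeftEquiv,
    Nat.card_congr (ZMod.addMonoidHomEquivKerNsmul _), IsAddCyclic.card_nsmulAddMonoidHom_ker,
    Nat.gcd_comm]

variable [Finite G] [IsAddCyclic G]

theorem IsAddCyclic.eq_ker_nsmul_card (H : AddSubgroup G) :
    H = (nsmulAddMonoidHom (Nat.card H) : G →+ G).ker := by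
  refine eq_of_le_of_card_ge (fun x hx => ?_) ?_
  · simpa only [AddMonoidHom.mem_ker, nsmulAddMonoidHom_apply, AddSubgroup.coe_nsmul,
      ZeroMemClass.coe_zero] using
      congrArg Subtype.val (card_nsmul_eq_zero' (G := H) (x := ⟨x, hx⟩))
  · rw [IsAddCyclic.card_nsmulAddMonoidHom_ker, Nat.gcd_eq_right (card_addSubgroup_dvd_card H)]

noncomputable def IsAddCyclic.addSubgroupEquivDivisors : AddSubgroup G ≃ (Nat.card G).divisors where
  toFun H := ⟨Nat.card H, Nat.mem_divisors.2 ⟨card_addSubgroup_dvd_card H, Nat.card_pos.ne'⟩⟩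
  invFun d := (nsmulAddMonoidHom (d : ℕ) : G →+ G).ker
  left_inv H := (eq_ker_nsmul_card H).symm
  right_inv d := Subtype.ext <| by
    show Nat.card (nsmulAddMonoidHom (d : ℕ) : G →+ G).ker = d
    rw [IsAddCyclic.card_nsmulAddMonoidHom_ker, Nat.gcd_eq_right (Nat.dvd_of_mem_divisors d.2)]

theorem IsAddCyclic.card_addSubgroup_prod {H : Type*} [AddCommGroup H] [Finite H]
    [IsAddCyclic H] :
    Nat.card (AddSubgroup (G × H)) =
      ∑ a ∈ (Nat.card G).divisors, ∑ b ∈ (Nat.card H).divisors, a.gcd (Nat.card H / b) := by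
  have := Fintype.ofFinite (AddSubgroup G)
  have := Fintype.ofFinite (AddSubgroup H)
  have (AK : AddSubgroup G × AddSubgroup H) : Finite (AK.1 →+ H ⧸ AK.2) :=
    Finite.of_injective _ DFunLike.coe_injective
  rw [Nat.card_congr prodEquivSigma, Nat.card_sigma, Fintype.sum_prod_type,
    ← Finset.sum_coe_sort (Nat.card G).divisors, ← addSubgroupEquivDivisors.sum_comp]
  refine Fintype.sum_congr _ _ fun A => ?_
  rw [← Finset.sum_coe_sort (Nat.card H).divisors, ← addSubgroupEquivDivisors.sum_comp]
  refine Fintype.sum_congr _ _ fun K => ?_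
  have : IsAddCyclic (H ⧸ K) := isAddCyclic_of_surjective _ (QuotientAddGroup.mk'_surjective K)
  rw [IsAddCyclic.card_addMonoidHom, Nat.eq_div_of_mul_eq_left Nat.card_pos.ne'
    (card_eq_card_quotient_mul_card_addSubgroup K).symm]
  rfl

end Cyclic

theorem Nat.gcd_pow_pow_eq_pow_min (p a b : ℕ) : (p ^ a).gcd (p ^ b) = p ^ min a b := by
  rcases le_total a b with h | h
  · rw [min_eq_left h, Nat.gcd_eq_left (pow_dvd_pow p h)]
  · rw [min_eq_right h, Nat.gcd_eq_right (pow_dvd_pow p h)]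

theorem Nat.sum_divisors_gcd_div_prime_pow {p : ℕ} (hp : p.Prime) (m n : ℕ) :
    ∑ a ∈ (p ^ m).divisors, ∑ b ∈ (p ^ n).divisors, a.gcd (p ^ n / b) =
      ∑ i ∈ Finset.range (m + 1), ∑ j ∈ Finset.range (n + 1), p ^ min i (n - j) := by
  simp only [Nat.divisors_prime_pow hp, Finset.sum_map, Function.Embedding.coeFn_mk]
  refine Finset.sum_congr rfl fun i _ => Finset.sum_congr rfl fun j hj => ?_
  rw [Nat.pow_div (Nat.lt_succ_iff.1 (Finset.mem_range.1 hj)) hp.pos, gcd_pow_pow_eq_pow_min]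

theorem stmt_4 (p : ℕ) (hp : p.Prime) :
    Nat.card (AddSubgroup (ZMod (p ^ 4) × ZMod (p ^ 2))) =
      3 * p ^ 2 + 5 * p + 7 := by
  have : NeZero p := ⟨hp.ne_zero⟩
  rw [IsAddCyclic.card_addSubgroup_prod, Nat.card_zmod, Nat.card_zmod,
    Nat.sum_divisors_gcd_div_prime_pow hp]
  simp only [Finset.sum_range_succ, Finset.range_one, Finset.sum_singleton, Nat.reduceAdd,
    tsub_zero, Nat.add_one_sub_one, tsub_self, zero_le, inf_of_le_right, inf_of_le_left,
    Nat.one_le_ofNat, Nat.reduceLeDiff, pow_zero, pow_one]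
  ring
end

section
/- The total number s(m,n) of subgroups of Z_m × Z_n equals ∑_{i | m} ∑_{j | n} gcd(i,j). -/
/-!
A subgroup `H ≤ A × B` is determined by its projection `P` to `A`, its intersection `K` with `B`
and a homomorphism `φ : P → B ⧸ K`: it consists of the pairs `(a, b)` with `a ∈ P` and
`b ≡ φ a` modulo `K` (Goursat). For cyclic `A` and `B`, the subgroups `P` are indexed by their
orders `i ∣ |A|`, the subgroups `K` by the orders `j = |B| / |K|` of the quotients, and there are
`gcd i j` homomorphisms `ℤ/i → ℤ/j`.
-/

namespace AddSubgroup

variable {A B : Type*} [AddCommGroup A] [AddCommGroup B] {P : AddSubgroup A} {K : AddSubgroup B}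

def graphModulo (φ : P →+ B ⧸ K) : AddSubgroup (A × B) where
  carrier := {x | ∃ p : P, (p : A) = x.1 ∧ φ p = x.2}
  add_mem' := by
    rintro ⟨_, b⟩ ⟨_, c⟩ ⟨p, rfl, hp⟩ ⟨q, rfl, hq⟩
    exact ⟨p + q, rfl, by simp [hp, hq]⟩
  zero_mem' := ⟨0, rfl, by simp⟩
  neg_mem' := by
    rintro ⟨_, b⟩ ⟨p, rfl, hp⟩
    exact ⟨-p, rfl, by simp [hp]⟩

@[simp]
theorem mem_graphModulo {φ : P →+ B ⧸ K} {x : A × B} :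
    x ∈ graphModulo φ ↔ ∃ p : P, (p : A) = x.1 ∧ φ p = x.2 :=
  Iff.rfl

theorem map_fst_graphModulo (φ : P →+ B ⧸ K) :
    (graphModulo φ).map (AddMonoidHom.fst A B) = P := by
  ext a
  constructor
  · rintro ⟨⟨_, _⟩, ⟨p, rfl, -⟩, rfl⟩
    exact p.2
  intro ha
  obtain ⟨b, hb⟩ := QuotientAddGroup.mk_surjective (φ ⟨a, ha⟩)
  exact ⟨(a, b), ⟨⟨a, ha⟩, rfl, hb.symm⟩, rfl⟩

theorem comap_inr_graphModulo (φ : P →+ B ⧸ K) :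
    (graphModulo φ).comap (AddMonoidHom.inr A B) = K := by
  ext b
  simp [eq_comm (a := (0 : B ⧸ K))]

theorem graphModulo_injective : Function.Injective (graphModulo : (P →+ B ⧸ K) → _) := by
  intro φ ψ h
  ext p
  obtain ⟨b, hb⟩ := QuotientAddGroup.mk_surjective (φ p)
  obtain ⟨q, hqp, hq⟩ : ((p : A), b) ∈ graphModulo ψ := h ▸ ⟨p, rfl, hb.symm⟩
  obtain rfl : q = p := Subtype.ext hqp
  exact hb.symm.trans hq.symm

theorem exists_graphModulo_eq (H : AddSubgroup (A × B)) :
    ∃ φ : H.map (AddMonoidHom.fst A B) →+ B ⧸ H.comap (AddMonoidHom.inr A B),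
      graphModulo φ = H := by
  set f := (AddMonoidHom.fst A B).addSubgroupMap H
  have hf : Function.Surjective f := (AddMonoidHom.fst A B).addSubgroupMap_surjective H
  set g : H →+ B ⧸ H.comap (AddMonoidHom.inr A B) :=
    (QuotientAddGroup.mk' _).comp ((AddMonoidHom.snd A B).comp H.subtype)
  have hker : f.ker ≤ g.ker := by
    rintro ⟨⟨a, b⟩, hab⟩ hfx
    obtain rfl : a = 0 := congrArg Subtype.val hfx
    simpa [g] using hab
  set φ := f.liftOfRightInverse (Function.surjInv hf) (Function.rightInverse_surjInv hf) ⟨g, hker⟩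
  have hφ (x : H) : φ (f x) = x.1.2 := f.liftOfRightInverse_comp_apply _ _ _ x
  refine ⟨φ, le_antisymm ?_ fun x hx => ⟨f ⟨x, hx⟩, rfl, hφ ⟨x, hx⟩⟩⟩
  rintro ⟨_, b⟩ ⟨p, rfl, hp⟩
  obtain ⟨x, rfl⟩ := hf p
  rw [hφ, QuotientAddGroup.eq] at hp
  convert H.add_mem x.2 hp using 1
  ext <;> simp [f]

noncomputable def addSubgroupProdEquiv :
    (Σ P : AddSubgroup A, Σ K : AddSubgroup B, P →+ B ⧸ K) ≃ AddSubgroup (A × B) :=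
  Equiv.ofBijective (fun φ => graphModulo φ.2.2) ⟨by
    rintro ⟨P, K, φ⟩ ⟨P', K', ψ⟩ (h : graphModulo φ = graphModulo ψ)
    obtain rfl : P = P' := by rw [← map_fst_graphModulo φ, h, map_fst_graphModulo]
    obtain rfl : K = K' := by rw [← comap_inr_graphModulo φ, h, comap_inr_graphModulo]
    rw [graphModulo_injective h],
  fun H => ⟨⟨_, _, (exists_graphModulo_eq H).choose⟩, (exists_graphModulo_eq H).choose_spec⟩⟩

theorem card_addSubgroup_prod_eq_sum [Finite A] [Finite B] [Fintype (AddSubgroup A)]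
    [Fintype (AddSubgroup B)] :
    Nat.card (AddSubgroup (A × B)) =
      ∑ P : AddSubgroup A, ∑ K : AddSubgroup B, Nat.card (P →+ B ⧸ K) := by
  have (P : AddSubgroup A) (K : AddSubgroup B) : Finite (P →+ B ⧸ K) :=
    Finite.of_injective _ DFunLike.coe_injective
  simp_rw [← Nat.card_congr addSubgroupProdEquiv, Nat.card_sigma]

end AddSubgroup

open AddSubgroup

namespace IsAddCyclic

variable {G : Type*} [AddCommGroup G]

noncomputable def addMonoidHomEquivKerNsmul {g : G} (hg : ∀ x, x ∈ zmultiples g)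
    (C : Type*) [AddCommGroup C] : (G →+ C) ≃ (nsmulAddMonoidHom (Nat.card G) : C →+ C).ker where
  toFun f := ⟨f g, by
    rw [AddMonoidHom.mem_ker, nsmulAddMonoidHom_apply, ← map_nsmul,
      ← addOrderOf_eq_card_of_forall_mem_zmultiples hg, addOrderOf_nsmul_eq_zero, map_zero]⟩
  invFun c := addMonoidHomOfForallMemZMultiples hg <| by
    rw [addOrderOf_eq_card_of_forall_mem_zmultiples hg]
    exact addOrderOf_dvd_iff_nsmul_eq_zero.mpr c.2
  left_inv f := by
    rw [AddMonoidHom.eq_iff_eq_on_generator hg, addMonoidHomOfForallMemZMultiples_apply_gen]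
  right_inv c := Subtype.ext (addMonoidHomOfForallMemZMultiples_apply_gen _ _)

theorem card_addMonoidHom_s16 [IsAddCyclic G] {C : Type*} [AddCommGroup C] [IsAddCyclic C]
    [Finite C] : Nat.card (G →+ C) = (Nat.card G).gcd (Nat.card C) := by
  obtain ⟨g, hg⟩ := IsAddCyclic.exists_generator (α := G)
  rw [Nat.card_congr (addMonoidHomEquivKerNsmul hg C), card_nsmulAddMonoidHom_ker, Nat.gcd_comm]

variable [IsAddCyclic G] [Finite G]

theorem eq_ker_nsmul_card_s16 (H : AddSubgroup G) :
    H = (nsmulAddMonoidHom (Nat.card H) : G →+ G).ker := by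
  refine eq_of_le_of_card_ge (fun x hx => ?_) ?_
  · exact addOrderOf_dvd_iff_nsmul_eq_zero.mp (H.addOrderOf_dvd_natCard hx)
  · rw [card_nsmulAddMonoidHom_ker, Nat.gcd_eq_right (card_addSubgroup_dvd_card H)]

theorem sum_addSubgroup [Fintype (AddSubgroup G)] {M : Type*} [AddCommMonoid M] (f : ℕ → M) :
    ∑ H : AddSubgroup G, f (Nat.card H) = ∑ d ∈ (Nat.card G).divisors, f d := by
  refine Finset.sum_nbij' (fun H => Nat.card H) (fun d => (nsmulAddMonoidHom d : G →+ G).ker)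
    (fun H _ => Nat.mem_divisors.mpr ⟨card_addSubgroup_dvd_card H, Nat.card_pos.ne'⟩)
    (fun _ _ => Finset.mem_univ _) (fun H _ => (eq_ker_nsmul_card_s16 H).symm) (fun d hd => ?_)
    (fun _ _ => rfl)
  rw [card_nsmulAddMonoidHom_ker, Nat.gcd_eq_right (Nat.dvd_of_mem_divisors hd)]

theorem card_addSubgroup_prod_s16 {A B : Type*} [AddCommGroup A] [AddCommGroup B]
    [IsAddCyclic A] [IsAddCyclic B] [Finite A] [Finite B] :
    Nat.card (AddSubgroup (A × B)) =
      ∑ i ∈ (Nat.card A).divisors, ∑ j ∈ (Nat.card B).divisors, i.gcd j := by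
  classical
  have (K : AddSubgroup B) : IsAddCyclic (B ⧸ K) :=
    isAddCyclic_of_surjective _ (QuotientAddGroup.mk'_surjective K)
  have card_quotient (K : AddSubgroup B) : Nat.card (B ⧸ K) = Nat.card B / Nat.card K := by
    rw [card_eq_card_quotient_mul_card_addSubgroup K, Nat.mul_div_cancel _ Nat.card_pos]
  let := Fintype.ofFinite (AddSubgroup A)
  let := Fintype.ofFinite (AddSubgroup B)
  calc Nat.card (AddSubgroup (A × B))
      = ∑ P : AddSubgroup A, ∑ K : AddSubgroup B, (Nat.card P).gcd (Nat.card B / Nat.card K) := by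
        simp_rw [AddSubgroup.card_addSubgroup_prod_eq_sum, card_addMonoidHom_s16, card_quotient]
    _ = ∑ P : AddSubgroup A, ∑ j ∈ (Nat.card B).divisors, (Nat.card P).gcd j :=
        Finset.sum_congr rfl fun P _ => by
          rw [sum_addSubgroup fun k => (Nat.card P).gcd (Nat.card B / k), Nat.sum_div_divisors]
    _ = _ := sum_addSubgroup fun i => ∑ j ∈ (Nat.card B).divisors, i.gcd j

end IsAddCyclic

theorem stmt_16 (m n : ℕ) (hm : 1 ≤ m) (hn : 1 ≤ n) :
    Nat.card (AddSubgroup (ZMod m × ZMod n)) =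
      ∑ i ∈ m.divisors, ∑ j ∈ n.divisors, Nat.gcd i j := by
  have : NeZero m := ⟨by omega⟩
  have : NeZero n := ⟨by omega⟩
  rw [IsAddCyclic.card_addSubgroup_prod_s16, Nat.card_zmod, Nat.card_zmod]
end

section
/- The map (a,b,c,d,ℓ) ↦ K_{a,b,c,d,ℓ} is a bijection between J_{m,n} and the set of subgroups of Z_m × Z_n, where K_{a,b,c,d,ℓ} = {(i·m/a, i·ℓ·n/c + j·n/d) : 0 ≤ i ≤ a−1, 0 ≤ j ≤ d−1}; moreover K_{a,b,c,d,ℓ} has order a·d and exponent lcm(a,c). -/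
/-- The index set `J_{m,n}` of quintuples `(a,b,c,d,ℓ)`. -/
def Jset (m n : ℕ) : Set (ℕ × ℕ × ℕ × ℕ × ℕ) :=
  {t | match t with
    | (a, b, c, d, l) =>
      0 < a ∧ 0 < b ∧ 0 < c ∧ 0 < d ∧ 0 < l ∧
        a ∣ m ∧ b ∣ a ∧ c ∣ n ∧ d ∣ c ∧ a / b = c / d ∧
        l ≤ a / b ∧ Nat.gcd l (a / b) = 1}

/-- The subset `K_{a,b,c,d,ℓ}` of `Z_m × Z_n`. -/
def Kset (m n a c d l : ℕ) : Set (ZMod m × ZMod n) :=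
  {x | ∃ i < a, ∃ j < d,
    x = (((i * (m / a) : ℕ) : ZMod m), ((i * l * (n / c) + j * (n / d) : ℕ) : ZMod n))}

/-!
For a subgroup `H ≤ Z_m × Z_n` let `A`, `C` be its two projections and `D = H ∩ (0 × Z_n)`,
of orders `a`, `c`, `d`. Subgroups of a cyclic group are determined by their order, so
`A = ⟨m/a⟩`, `C = ⟨n/c⟩` and `D = ⟨n/d⟩`, and `H` is generated by `(0, n/d)` together with any
lift `(m/a, t·n/c)` of the generator of `A`. Since `n/d = e·(n/c)` with `e = c/d`, the lift can be
corrected by a multiple of `(0, n/d)` so that `t = ℓ ∈ [1, e]`, and then `ℓ` is determined by `H`.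
The second projection of the subgroup generated by `(m/a, ℓ·n/c)` and `(0, n/d)` is generated by
`ℓ·n/c` and `e·n/c`, so it is all of `⟨n/c⟩` iff `gcd(ℓ, e) = 1`; its trace on `0 × Z_n` is
`⟨n/d⟩` iff `e ∣ a`, which is where `b = a/e` comes from. Finally `|H| = |A|·|D| = a·d`, and the
exponent of `H` is the lcm of the exponents `a` and `c` of its cyclic projections.
-/

open AddSubgroup

theorem Int.exists_natCast_add_mul_eq {A : ℕ} (hA : 0 < A) (s : ℤ) :
    ∃ r < A, ∃ q : ℤ, s = r + A * q := by
  have h₁ := Int.emod_nonneg s (by omega : (A : ℤ) ≠ 0)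
  have h₂ := Int.emod_lt_of_pos s (by omega : (0 : ℤ) < A)
  exact ⟨(s % A).toNat, by omega, s / A, by rw [Int.toNat_of_nonneg h₁, Int.emod_add_mul_ediv]⟩

namespace AddSubgroup

variable {G G' : Type*}

section AddGroup

variable [AddGroup G] [AddGroup G']

theorem card_eq_card_map_fst_mul_card_comap_inr (H : AddSubgroup (G × G')) :
    Nat.card H =
      Nat.card (H.map (AddMonoidHom.fst G G')) * Nat.card (H.comap (AddMonoidHom.inr G G')) := by
  set f := (AddMonoidHom.fst G G').comp H.subtype
  have hrange : f.range = H.map (AddMonoidHom.fst G G') := by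
    rw [AddMonoidHom.range_comp, range_subtype]
  have hker : Nat.card f.ker = Nat.card (H.comap (AddMonoidHom.inr G G')) :=
    Nat.card_congr
      { toFun := fun z => ⟨z.1.1.2, by
          have h : z.1.1 = (0, z.1.1.2) := Prod.ext z.2 rfl
          simp [← h]⟩
        invFun := fun y => ⟨⟨(0, y), y.2⟩, rfl⟩
        left_inv := fun z => Subtype.ext (Subtype.ext (Prod.ext z.2.symm rfl))
        right_inv := fun _ => rfl }
  rw [← card_mul_index f.ker, index_ker, hrange, hker, mul_comm]

theorem comap_inr_le_map_snd (H : AddSubgroup (G × G')) :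
    H.comap (AddMonoidHom.inr G G') ≤ H.map (AddMonoidHom.snd G G') :=
  fun z hz => ⟨(0, z), hz, rfl⟩

theorem eq_closure_pair_of_map_fst_le_of_comap_inr_le {H : AddSubgroup (G × G')}
    {x : G × G'} {y : G'} (hx : x ∈ H) (hy : (0, y) ∈ H)
    (hfst : H.map (AddMonoidHom.fst G G') ≤ zmultiples x.1)
    (hinr : H.comap (AddMonoidHom.inr G G') ≤ zmultiples y) :
    H = closure {x, (0, y)} := by
  refine le_antisymm (fun z hz => ?_)
    ((closure_le H).mpr (Set.insert_subset hx (by simpa using hy)))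
  obtain ⟨i, hi⟩ := mem_zmultiples_iff.mp (hfst ⟨z, hz, rfl⟩)
  have hi : i • x.1 = z.1 := hi
  obtain ⟨j, hj⟩ := mem_zmultiples_iff.mp <| hinr (x := (z - i • x).2) <| by
    have h : (0, (z - i • x).2) = z - i • x := Prod.ext (by simp [hi]) rfl
    rw [mem_comap, AddMonoidHom.inr_apply, h]
    exact sub_mem hz (zsmul_mem hx i)
  have hz : z = j • ((0 : G), y) + i • x := by
    ext <;> simp [hi, hj]
  rw [hz]
  exact add_mem (zsmul_mem (subset_closure (by simp)) j) (zsmul_mem (subset_closure (by simp)) i)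

theorem exponent_eq_lcm_exponent_map_fst_exponent_map_snd (H : AddSubgroup (G × G')) :
    AddMonoid.exponent H = Nat.lcm (AddMonoid.exponent (H.map (AddMonoidHom.fst G G')))
      (AddMonoid.exponent (H.map (AddMonoidHom.snd G G'))) := by
  refine Nat.dvd_antisymm (AddMonoid.exponent_dvd.mpr fun z => ?_)
    (Nat.lcm_dvd (AddMonoidHom.exponent_dvd (AddMonoidHom.addSubgroupMap_surjective _ H))
      (AddMonoidHom.exponent_dvd (AddMonoidHom.addSubgroupMap_surjective _ H)))
  rw [← AddSubgroup.addOrderOf_coe, Prod.addOrderOf_mk]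
  have h₁ := AddMonoid.addOrder_dvd_exponent
    (⟨z.1.1, z.1, z.2, rfl⟩ : H.map (AddMonoidHom.fst G G'))
  have h₂ := AddMonoid.addOrder_dvd_exponent
    (⟨z.1.2, z.1, z.2, rfl⟩ : H.map (AddMonoidHom.snd G G'))
  rw [← AddSubgroup.addOrderOf_coe] at h₁ h₂
  exact Nat.lcm_dvd (h₁.trans (Nat.dvd_lcm_left _ _)) (h₂.trans (Nat.dvd_lcm_right _ _))

theorem natCast_dvd_of_zsmul_mem_zmultiples_nsmul {g : G} {e : ℕ} {k : ℤ}
    (he : e ∣ addOrderOf g) (h : k • g ∈ zmultiples (e • g)) : (e : ℤ) ∣ k := by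
  obtain ⟨j, hj⟩ := mem_zmultiples_iff.mp h
  have hzero : (k - j * e) • g = 0 := by
    rw [sub_zsmul, mul_zsmul, natCast_zsmul, hj, add_neg_cancel]
  have := (Int.natCast_dvd_natCast.mpr he).trans (addOrderOf_dvd_iff_zsmul_eq_zero.mpr hzero)
  simpa using dvd_add this (Dvd.intro_left j rfl)

theorem closure_pair_nsmul_eq_zmultiples_iff {g : G} {l e : ℕ} (he : e ∣ addOrderOf g) :
    closure {l • g, e • g} = zmultiples g ↔ Nat.Coprime l e := by
  constructor
  · intro h
    have hle : closure {l • g, e • g} ≤ zmultiples (Nat.gcd l e • g) := by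
      refine (closure_le _).mpr (Set.insert_subset ?_ (Set.singleton_subset_iff.mpr ?_))
      · exact mem_zmultiples_iff.mpr ⟨(l / Nat.gcd l e : ℕ), by
          rw [natCast_zsmul, smul_smul, Nat.div_mul_cancel (Nat.gcd_dvd_left l e)]⟩
      · exact mem_zmultiples_iff.mpr ⟨(e / Nat.gcd l e : ℕ), by
          rw [natCast_zsmul, smul_smul, Nat.div_mul_cancel (Nat.gcd_dvd_right l e)]⟩
    have hg : (1 : ℤ) • g ∈ zmultiples (Nat.gcd l e • g) := by
      rw [one_zsmul]; exact hle (h ▸ mem_zmultiples g)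
    exact Nat.eq_one_of_dvd_one (Int.natCast_dvd_natCast.mp
      (natCast_dvd_of_zsmul_mem_zmultiples_nsmul ((Nat.gcd_dvd_right l e).trans he) hg))
  · intro h
    refine le_antisymm ((closure_le _).mpr (Set.insert_subset ?_ ?_)) (zmultiples_le.mpr ?_)
    · exact nsmul_mem (mem_zmultiples g) l
    · exact Set.singleton_subset_iff.mpr (nsmul_mem (mem_zmultiples g) e)
    · have hbez : (Nat.gcdA l e * l + Nat.gcdB l e * e : ℤ) = 1 := by
        have := Nat.gcd_eq_gcd_ab l e
        rw [h] at this; push_cast at this; linarith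
      have hg : (Nat.gcdA l e) • (l • g) + (Nat.gcdB l e) • (e • g) = g := by
        rw [← natCast_zsmul, ← natCast_zsmul, smul_smul, smul_smul, ← add_zsmul, hbez, one_zsmul]
      have hmem : (Nat.gcdA l e) • (l • g) + (Nat.gcdB l e) • (e • g) ∈ closure {l • g, e • g} :=
        add_mem (zsmul_mem (subset_closure (by simp)) _) (zsmul_mem (subset_closure (by simp)) _)
      rwa [hg] at hmem

end AddGroup

section AddCommGroup

variable [AddCommGroup G] [AddCommGroup G']

theorem mem_closure_pair_iff_exists_lt {x y z : G} {A D k : ℕ} (hA : 0 < A) (hD : 0 < D)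
    (hx : A • x = k • y) (hy : D • y = 0) :
    z ∈ closure {x, y} ↔ ∃ i < A, ∃ j < D, z = i • x + j • y := by
  refine ⟨fun hz => ?_, ?_⟩
  · obtain ⟨i, j, rfl⟩ := mem_closure_pair.mp hz
    obtain ⟨r, hr, q, rfl⟩ := Int.exists_natCast_add_mul_eq hA i
    obtain ⟨r', hr', q', hq'⟩ := Int.exists_natCast_add_mul_eq hD (j + q * k)
    refine ⟨r, hr, r', hr', ?_⟩
    calc ((r : ℤ) + A * q) • x + j • y = r • x + (j + q * k) • y := by
          rw [add_zsmul, add_zsmul, mul_zsmul' x, mul_zsmul y, natCast_zsmul x A, natCast_zsmul y k,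
            natCast_zsmul x r, hx]
          abel
      _ = r • x + r' • y := by
          rw [hq', add_zsmul, mul_comm, mul_zsmul, natCast_zsmul, natCast_zsmul, hy]
          simp
  · rintro ⟨i, -, j, -, rfl⟩
    exact add_mem (nsmul_mem (subset_closure (by simp)) i) (nsmul_mem (subset_closure (by simp)) j)

theorem map_fst_closure_pair_inr (x : G × G') (y : G') :
    (closure {x, (0, y)}).map (AddMonoidHom.fst G G') = zmultiples x.1 := by
  rw [AddMonoidHom.map_closure, Set.image_pair, zmultiples_eq_closure]
  simp [Set.pair_comm, closure_insert_zero]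

theorem map_snd_closure_pair_inr (x : G × G') (y : G') :
    (closure {x, (0, y)}).map (AddMonoidHom.snd G G') = closure {x.2, y} := by
  rw [AddMonoidHom.map_closure, Set.image_pair]
  rfl

theorem comap_inr_closure_pair_inr {x : G × G'} {y : G'}
    (hx : addOrderOf x.1 • x.2 ∈ zmultiples y) :
    (closure {x, (0, y)}).comap (AddMonoidHom.inr G G') = zmultiples y := by
  refine le_antisymm (fun z hz => ?_) (zmultiples_le.mpr (subset_closure (by simp)))
  obtain ⟨i, j, hij⟩ := mem_closure_pair.mp hz
  obtain ⟨q, rfl⟩ : (addOrderOf x.1 : ℤ) ∣ i :=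
    addOrderOf_dvd_iff_zsmul_eq_zero.mpr (by simpa using congrArg Prod.fst hij)
  have hz : z = q • (addOrderOf x.1 • x.2) + j • y := by
    simpa [mul_comm _ q, mul_zsmul] using (congrArg Prod.snd hij).symm
  rw [hz]
  exact add_mem (zsmul_mem hx q) (zsmul_mem (mem_zmultiples y) j)

end AddCommGroup

end AddSubgroup

namespace ZMod

theorem natCast_div_eq_nsmul_natCast_div {n c d : ℕ} (hdc : d ∣ c) (hcn : c ∣ n) :
    ((n / d : ℕ) : ZMod n) = (c / d) • ((n / c : ℕ) : ZMod n) := by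
  rw [nsmul_eq_mul, ← Nat.cast_mul, mul_comm, Nat.div_mul_div hcn hdc]

theorem nsmul_nsmul_natCast_div {n a c d l : ℕ} (hdc : d ∣ c) (hcn : c ∣ n) (hea : c / d ∣ a) :
    a • l • ((n / c : ℕ) : ZMod n) = (a / (c / d) * l) • ((n / d : ℕ) : ZMod n) := by
  rw [natCast_div_eq_nsmul_natCast_div hdc hcn, smul_smul, smul_smul, mul_assoc,
    mul_comm l, ← mul_assoc, Nat.div_mul_cancel hea]

variable {m : ℕ} [NeZero m]

theorem addOrderOf_natCast_div {a : ℕ} (ha : a ∣ m) : addOrderOf ((m / a : ℕ) : ZMod m) = a := by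
  rw [addOrderOf_coe _ (NeZero.ne m), Nat.gcd_eq_right (Nat.div_dvd_of_dvd ha),
    Nat.div_div_self ha (NeZero.ne m)]

theorem card_zmultiples_natCast_div {a : ℕ} (ha : a ∣ m) :
    Nat.card (zmultiples ((m / a : ℕ) : ZMod m)) = a := by
  rw [Nat.card_zmultiples, addOrderOf_natCast_div ha]

theorem exponent_zmultiples_natCast_div {a : ℕ} (ha : a ∣ m) :
    AddMonoid.exponent (zmultiples ((m / a : ℕ) : ZMod m)) = a := by
  rw [IsAddCyclic.exponent_eq_card, card_zmultiples_natCast_div ha]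

theorem card_addSubgroup_dvd (K : AddSubgroup (ZMod m)) : Nat.card K ∣ m := by
  simpa using card_dvd_of_le (le_top : K ≤ ⊤)

theorem eq_zmultiples_natCast_div_card (K : AddSubgroup (ZMod m)) :
    K = zmultiples ((m / Nat.card K : ℕ) : ZMod m) := by
  set k := Nat.card K
  have hk : k ∣ m := card_addSubgroup_dvd K
  set N := (nsmulAddMonoidHom k : ZMod m →+ ZMod m).ker
  have hN : Nat.card N = k := by
    rw [IsAddCyclic.card_nsmulAddMonoidHom_ker, Nat.card_zmod, Nat.gcd_eq_right hk]
  have hKN : K = N := eq_of_le_of_card_ge (fun z hz =>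
    AddMonoidHom.mem_ker.mpr (congrArg Subtype.val (card_nsmul_eq_zero' (x := (⟨z, hz⟩ : K)))))
    hN.le
  refine hKN.trans (eq_of_le_of_card_ge (zmultiples_le.mpr ?_) ?_).symm
  · simp [N, ← Nat.cast_mul, Nat.mul_div_cancel' hk]
  · rw [hN, card_zmultiples_natCast_div hk]

theorem zmultiples_natCast_div_inj {a a' : ℕ} (ha : a ∣ m) (ha' : a' ∣ m) :
    zmultiples ((m / a : ℕ) : ZMod m) = zmultiples ((m / a' : ℕ) : ZMod m) ↔ a = a' := by
  refine ⟨fun h => ?_, fun h => h ▸ rfl⟩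
  rw [← card_zmultiples_natCast_div ha, h, card_zmultiples_natCast_div ha']

end ZMod

/-- `K_{a,b,c,d,ℓ}` presented by its two generators; it does not depend on `b`. -/
def Ksubgroup (m n a c d l : ℕ) : AddSubgroup (ZMod m × ZMod n) :=
  closure {(((m / a : ℕ) : ZMod m), l • ((n / c : ℕ) : ZMod n)), (0, ((n / d : ℕ) : ZMod n))}

section Ksubgroup

variable {m n a c d l : ℕ}

theorem map_fst_Ksubgroup :
    (Ksubgroup m n a c d l).map (AddMonoidHom.fst _ _) = zmultiples ((m / a : ℕ) : ZMod m) :=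
  map_fst_closure_pair_inr _ _

theorem map_snd_Ksubgroup_eq_iff [NeZero n] (hdc : d ∣ c) (hcn : c ∣ n) :
    (Ksubgroup m n a c d l).map (AddMonoidHom.snd _ _) = zmultiples ((n / c : ℕ) : ZMod n) ↔
      Nat.Coprime l (c / d) := by
  rw [Ksubgroup, map_snd_closure_pair_inr, ZMod.natCast_div_eq_nsmul_natCast_div hdc hcn]
  exact closure_pair_nsmul_eq_zmultiples_iff
    (by rw [ZMod.addOrderOf_natCast_div hcn]; exact Nat.div_dvd_of_dvd hdc)

theorem comap_inr_Ksubgroup_eq_iff [NeZero m] [NeZero n] (ham : a ∣ m) (hdc : d ∣ c) (hcn : c ∣ n)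
    (hl : Nat.Coprime l (c / d)) :
    (Ksubgroup m n a c d l).comap (AddMonoidHom.inr _ _) = zmultiples ((n / d : ℕ) : ZMod n) ↔
      c / d ∣ a := by
  refine ⟨fun h => ?_, fun hea => comap_inr_closure_pair_inr ?_⟩
  · have hmem : a • (((m / a : ℕ) : ZMod m), l • ((n / c : ℕ) : ZMod n)) ∈ Ksubgroup m n a c d l :=
      nsmul_mem (subset_closure (by simp)) a
    have hzero := addOrderOf_nsmul_eq_zero ((m / a : ℕ) : ZMod m)
    rw [ZMod.addOrderOf_natCast_div ham] at hzero
    have hsnd : ((a * l : ℕ) : ℤ) • ((n / c : ℕ) : ZMod n) ∈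
        zmultiples ((c / d) • ((n / c : ℕ) : ZMod n)) := by
      rw [← ZMod.natCast_div_eq_nsmul_natCast_div hdc hcn, ← h, mem_comap, AddMonoidHom.inr_apply,
        natCast_zsmul, mul_nsmul']
      simpa [hzero] using hmem
    have := natCast_dvd_of_zsmul_mem_zmultiples_nsmul
      (by rw [ZMod.addOrderOf_natCast_div hcn]; exact Nat.div_dvd_of_dvd hdc) hsnd
    exact hl.symm.dvd_of_dvd_mul_right (Int.natCast_dvd_natCast.mp this)
  · rw [ZMod.addOrderOf_natCast_div ham, ZMod.nsmul_nsmul_natCast_div hdc hcn hea]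
    exact nsmul_mem (mem_zmultiples _) _

theorem eq_of_Ksubgroup_eq [NeZero m] [NeZero n] {l' : ℕ} (ham : a ∣ m) (hdc : d ∣ c) (hcn : c ∣ n)
    (hea : c / d ∣ a) (hcop : Nat.Coprime l' (c / d)) (hl : l ∈ Set.Icc 1 (c / d))
    (hl' : l' ∈ Set.Icc 1 (c / d)) (h : Ksubgroup m n a c d l = Ksubgroup m n a c d l') :
    l = l' := by
  have hmem : ((l : ℤ) - l') • ((n / c : ℕ) : ZMod n) ∈
      (Ksubgroup m n a c d l').comap (AddMonoidHom.inr _ _) := by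
    have hx : (((m / a : ℕ) : ZMod m), l • ((n / c : ℕ) : ZMod n)) ∈ Ksubgroup m n a c d l' :=
      h ▸ subset_closure (Set.mem_insert _ _)
    have hx' : (((m / a : ℕ) : ZMod m), l' • ((n / c : ℕ) : ZMod n)) ∈ Ksubgroup m n a c d l' :=
      subset_closure (Set.mem_insert _ _)
    rw [mem_comap]
    convert sub_mem hx hx' using 1
    ext <;> simp [sub_mul]
  rw [(comap_inr_Ksubgroup_eq_iff ham hdc hcn hcop).mpr hea,
    ZMod.natCast_div_eq_nsmul_natCast_div hdc hcn] at hmem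
  have hdvd := natCast_dvd_of_zsmul_mem_zmultiples_nsmul
    (by rw [ZMod.addOrderOf_natCast_div hcn]; exact Nat.div_dvd_of_dvd hdc) hmem
  have := Int.eq_zero_of_abs_lt_dvd hdvd (abs_sub_lt_iff.mpr ⟨by grind, by grind⟩)
  omega

theorem exists_eq_Ksubgroup [NeZero n] {H : AddSubgroup (ZMod m × ZMod n)} (hdc : d ∣ c)
    (hcn : c ∣ n)
    (hA : H.map (AddMonoidHom.fst _ _) = zmultiples ((m / a : ℕ) : ZMod m))
    (hC : H.map (AddMonoidHom.snd _ _) = zmultiples ((n / c : ℕ) : ZMod n))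
    (hD : H.comap (AddMonoidHom.inr _ _) = zmultiples ((n / d : ℕ) : ZMod n)) :
    ∃ l ∈ Set.Icc 1 (c / d), H = Ksubgroup m n a c d l := by
  have hc0 : 0 < c := Nat.pos_of_dvd_of_pos hcn (Nat.pos_of_ne_zero (NeZero.ne n))
  have he : 0 < c / d := Nat.div_pos (Nat.le_of_dvd hc0 hdc) (Nat.pos_of_dvd_of_pos hdc hc0)
  obtain ⟨h, hH, h1⟩ := mem_map.mp (hA ▸ mem_zmultiples ((m / a : ℕ) : ZMod m))
  obtain ⟨t, ht⟩ := mem_zmultiples_iff.mp (by rw [← hC]; exact mem_map_of_mem _ hH)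
  obtain ⟨r, hr, q, hq⟩ := Int.exists_natCast_add_mul_eq he (t - 1)
  have hy : ((0 : ZMod m), ((n / d : ℕ) : ZMod n)) ∈ H := by
    simpa using (hD ▸ mem_zmultiples _ : _ ∈ H.comap (AddMonoidHom.inr _ _))
  have hx : (((m / a : ℕ) : ZMod m), (r + 1) • ((n / c : ℕ) : ZMod n)) ∈ H := by
    convert sub_mem hH (zsmul_mem hy q) using 1
    refine Prod.ext (by simpa using h1.symm) ?_
    have ht : t • ((n / c : ℕ) : ZMod n) = h.2 := ht
    rw [Prod.snd_sub, ← ht, Prod.smul_snd, ZMod.natCast_div_eq_nsmul_natCast_div hdc hcn,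
      ← natCast_zsmul, ← natCast_zsmul, smul_smul, ← sub_smul]
    refine congrArg (· • _) ?_
    rw [Nat.cast_add, Nat.cast_one]
    linarith
  exact ⟨r + 1, ⟨by omega, hr⟩, eq_closure_pair_of_map_fst_le_of_comap_inr_le hx hy hA.le hD.le⟩

end Ksubgroup

section Jset

variable {m n a b c d l : ℕ}

theorem div_dvd_and_coprime_of_mem_Jset (ht : (a, b, c, d, l) ∈ Jset m n) :
    c / d ∣ a ∧ Nat.Coprime l (c / d) := by
  obtain ⟨-, -, -, -, -, -, hba, -, -, habcd, -, hgcd⟩ := ht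
  exact ⟨habcd ▸ Nat.div_dvd_of_dvd hba, habcd ▸ hgcd⟩

theorem coe_Ksubgroup_of_mem_Jset (ht : (a, b, c, d, l) ∈ Jset m n) :
    (Ksubgroup m n a c d l : Set (ZMod m × ZMod n)) = Kset m n a c d l := by
  obtain ⟨hea, -⟩ := div_dvd_and_coprime_of_mem_Jset ht
  obtain ⟨ha0, -, -, hd0, -, ham, -, hcn, hdc, -⟩ := ht
  have hx : a • (((m / a : ℕ) : ZMod m), l • ((n / c : ℕ) : ZMod n)) =
      (a / (c / d) * l) • ((0 : ZMod m), ((n / d : ℕ) : ZMod n)) := by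
    rw [Prod.smul_mk, Prod.smul_mk, ZMod.nsmul_nsmul_natCast_div hdc hcn hea, smul_zero,
      nsmul_eq_mul, ← Nat.cast_mul, Nat.mul_div_cancel' ham, ZMod.natCast_self]
  have hy : d • ((0 : ZMod m), ((n / d : ℕ) : ZMod n)) = 0 := by
    rw [Prod.smul_mk, smul_zero, nsmul_eq_mul, ← Nat.cast_mul, Nat.mul_div_cancel' (hdc.trans hcn),
      ZMod.natCast_self, Prod.mk_zero_zero]
  ext z
  rw [SetLike.mem_coe, Ksubgroup, mem_closure_pair_iff_exists_lt ha0 hd0 hx hy]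
  simp [Kset, Prod.ext_iff, nsmul_eq_mul, mul_assoc]

theorem card_Ksubgroup_of_mem_Jset [NeZero m] [NeZero n] (ht : (a, b, c, d, l) ∈ Jset m n) :
    Nat.card (Ksubgroup m n a c d l) = a * d := by
  obtain ⟨hea, hl⟩ := div_dvd_and_coprime_of_mem_Jset ht
  obtain ⟨-, -, -, -, -, ham, -, hcn, hdc, -⟩ := ht
  rw [card_eq_card_map_fst_mul_card_comap_inr, map_fst_Ksubgroup,
    (comap_inr_Ksubgroup_eq_iff ham hdc hcn hl).mpr hea, ZMod.card_zmultiples_natCast_div ham,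
    ZMod.card_zmultiples_natCast_div (hdc.trans hcn)]

theorem exponent_Ksubgroup_of_mem_Jset [NeZero m] [NeZero n] (ht : (a, b, c, d, l) ∈ Jset m n) :
    AddMonoid.exponent (Ksubgroup m n a c d l) = Nat.lcm a c := by
  obtain ⟨-, hl⟩ := div_dvd_and_coprime_of_mem_Jset ht
  obtain ⟨-, -, -, -, -, ham, -, hcn, hdc, -⟩ := ht
  rw [exponent_eq_lcm_exponent_map_fst_exponent_map_snd, map_fst_Ksubgroup,
    (map_snd_Ksubgroup_eq_iff hdc hcn).mpr hl, ZMod.exponent_zmultiples_natCast_div ham,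
    ZMod.exponent_zmultiples_natCast_div hcn]

end Jset

theorem exists_mem_Jset_eq_Ksubgroup {m n a c d : ℕ} [NeZero m] [NeZero n]
    {H : AddSubgroup (ZMod m × ZMod n)} (ham : a ∣ m) (hcn : c ∣ n) (hdc : d ∣ c)
    (hA : H.map (AddMonoidHom.fst _ _) = zmultiples ((m / a : ℕ) : ZMod m))
    (hC : H.map (AddMonoidHom.snd _ _) = zmultiples ((n / c : ℕ) : ZMod n))
    (hD : H.comap (AddMonoidHom.inr _ _) = zmultiples ((n / d : ℕ) : ZMod n)) :
    ∃ b l, (a, b, c, d, l) ∈ Jset m n ∧ H = Ksubgroup m n a c d l := by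
  obtain ⟨l, ⟨hl0, hle⟩, rfl⟩ := exists_eq_Ksubgroup hdc hcn hA hC hD
  have hl := (map_snd_Ksubgroup_eq_iff hdc hcn).mp hC
  have hea := (comap_inr_Ksubgroup_eq_iff ham hdc hcn hl).mp hD
  have ha0 : 0 < a := Nat.pos_of_dvd_of_pos ham (NeZero.pos m)
  have hc0 : 0 < c := Nat.pos_of_dvd_of_pos hcn (NeZero.pos n)
  have he0 : 0 < c / d := Nat.div_pos (Nat.le_of_dvd hc0 hdc) (Nat.pos_of_dvd_of_pos hdc hc0)
  have hae : a / (a / (c / d)) = c / d := Nat.div_div_self hea ha0.ne'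
  exact ⟨a / (c / d), l, ⟨ha0, Nat.div_pos (Nat.le_of_dvd ha0 hea) he0, hc0,
    Nat.pos_of_dvd_of_pos hdc hc0, hl0, ham, Nat.div_dvd_of_dvd hea, hcn, hdc, hae, by rwa [hae],
    by rwa [hae]⟩, rfl⟩

def toKsubgroup (m n : ℕ) (t : Jset m n) : AddSubgroup (ZMod m × ZMod n) :=
  Ksubgroup m n t.1.1 t.1.2.2.1 t.1.2.2.2.1 t.1.2.2.2.2

section toKsubgroup

variable {m n : ℕ} [NeZero m] [NeZero n]

theorem toKsubgroup_injective : Function.Injective (toKsubgroup m n) := by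
  rintro ⟨⟨a, b, c, d, l⟩, ht⟩ ⟨⟨a', b', c', d', l'⟩, ht'⟩ h
  change Ksubgroup m n a c d l = Ksubgroup m n a' c' d' l' at h
  obtain ⟨hea, hl⟩ := div_dvd_and_coprime_of_mem_Jset ht
  obtain ⟨hea', hl'⟩ := div_dvd_and_coprime_of_mem_Jset ht'
  obtain ⟨ha0, -, -, -, hl0, ham, hba, hcn, hdc, habcd, hle, -⟩ := ht
  obtain ⟨-, -, -, -, hl0', ham', hba', hcn', hdc', habcd', hle', -⟩ := ht'
  obtain rfl : a = a' := by
    rw [← ZMod.zmultiples_natCast_div_inj ham ham', ← map_fst_Ksubgroup, h, map_fst_Ksubgroup]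
  obtain rfl : c = c' := by
    rw [← ZMod.zmultiples_natCast_div_inj hcn hcn', ← (map_snd_Ksubgroup_eq_iff hdc hcn).mpr hl, h,
      (map_snd_Ksubgroup_eq_iff hdc' hcn').mpr hl']
  obtain rfl : d = d' := by
    rw [← ZMod.zmultiples_natCast_div_inj (hdc.trans hcn) (hdc'.trans hcn),
      ← (comap_inr_Ksubgroup_eq_iff ham hdc hcn hl).mpr hea, h,
      (comap_inr_Ksubgroup_eq_iff ham hdc' hcn hl').mpr hea']
  obtain rfl : b = b' := by
    rw [← Nat.div_div_self hba ha0.ne', habcd, ← habcd', Nat.div_div_self hba' ha0.ne']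
  obtain rfl : l = l' := eq_of_Ksubgroup_eq ham hdc hcn hea hl'
    ⟨hl0, habcd ▸ hle⟩ ⟨hl0', habcd ▸ hle'⟩ h
  rfl

theorem toKsubgroup_surjective : Function.Surjective (toKsubgroup m n) := by
  intro H
  obtain ⟨b, l, ht, hH⟩ := exists_mem_Jset_eq_Ksubgroup (ZMod.card_addSubgroup_dvd _)
    (ZMod.card_addSubgroup_dvd _) (card_dvd_of_le (comap_inr_le_map_snd H))
    (ZMod.eq_zmultiples_natCast_div_card _) (ZMod.eq_zmultiples_natCast_div_card _)
    (ZMod.eq_zmultiples_natCast_div_card (H.comap (AddMonoidHom.inr _ _)))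
  exact ⟨⟨_, ht⟩, hH.symm⟩

end toKsubgroup

theorem stmt_18 (m n : ℕ) (hm : 1 ≤ m) (hn : 1 ≤ n) :
    ∃ f : Jset m n ≃ AddSubgroup (ZMod m × ZMod n),
      ∀ t : Jset m n,
        ((f t : AddSubgroup (ZMod m × ZMod n)) : Set (ZMod m × ZMod n)) =
            Kset m n t.1.1 t.1.2.2.1 t.1.2.2.2.1 t.1.2.2.2.2 ∧
          Nat.card (f t) = t.1.1 * t.1.2.2.2.1 ∧
          AddMonoid.exponent (f t) = Nat.lcm t.1.1 t.1.2.2.1 := by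
  have : NeZero m := ⟨by omega⟩
  have : NeZero n := ⟨by omega⟩
  refine ⟨Equiv.ofBijective (toKsubgroup m n) ⟨toKsubgroup_injective, toKsubgroup_surjective⟩,
    fun ⟨(a, b, c, d, l), ht⟩ => ?_⟩
  exact ⟨coe_Ksubgroup_of_mem_Jset ht, card_Ksubgroup_of_mem_Jset ht,
    exponent_Ksubgroup_of_mem_Jset ht⟩
end
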